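/- Subsumption is an order up to isomorphism: on models satisfying the reachability constraint, the subsumption relation ⊑ is reflexive, transitive, and antisymmetric up to isomorphism (i.e. M ⊑ M' and M' ⊑ M imply M and M' are isomorphic); hence ⊑ induces a partial order on isomorphism classes of models. -/

import Mathlib

/-- A signature for Feature Structures with Wrappings: finite sets of types,
attributes and relations (with arities `m > 1`), together with base-labels
(node names), node variables and wrapping variables. -/
structure Signature where
  TYPE : Type
  ATTR : Type
  REL : Type
  arity : REL → ℕ
  NNAME : Type
  NVAR : Type
  WVAR : Type
  finTYPE : Finite TYPE
  finATTR : Finite ATTR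
  finREL : Finite REL
  arity_gt_one : ∀ r, 1 < arity r

/-- A model: a Feature Structure with Wrappings `F = ⟨V, 𝒲, I⟩` together with an
assignment `g = ⟨g_N, g_W⟩`.  `V` is a nonempty set of nodes, `Wr` (`𝒲`) is a set of
pairwise disjoint nonempty subsets of `V` (the wrappings), `I` interprets types as
node sets, attributes as partial functions `V ⇀ V`, `m`-ary relations as sets of
`m`-tuples of nodes, and base-labels as (at most one) nodes; `g_N : NVAR ⇀ V` and
`g_W : WVAR ⇀ 𝒲` are partial assignment functions. -/
structure Model (S : Signature) where
  V : Type
  v_nonempty : Nonempty V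
  Wr : Set (Set V)
  wr_nonempty : ∀ W ∈ Wr, W.Nonempty
  wr_disjoint : ∀ W ∈ Wr, ∀ X ∈ Wr, W ≠ X → W ∩ X = ∅
  itype : S.TYPE → Set V
  iattr : S.ATTR → V → Option V
  irel : (r : S.REL) → Set (Fin (S.arity r) → V)
  iname : S.NNAME → Option V
  gN : S.NVAR → Option V
  gW : S.WVAR → Option (Set V)
  gW_mem : ∀ x W, gW x = some W → W ∈ Wr

namespace Model

variable {S : Signature}

/-- The wrappings of a model, as a type. -/
def Wrp (M : Model S) : Type := {W : Set M.V // W ∈ M.Wr}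

/-- Application of a path of attributes to a node (a partial function). -/
def pathApply (M : Model S) : List S.ATTR → M.V → Option M.V
  | [], v => some v
  | a :: p, v => (M.iattr a v).bind (M.pathApply p)

/-- `u` and `v` lie in the same w-set (the w-sets are the elements of the
partition `𝒲 ∪ {V \ ⋃𝒲}`). -/
def sameW (M : Model S) (u v : M.V) : Prop :=
  (∃ W ∈ M.Wr, u ∈ W ∧ v ∈ W) ∨ (u ∉ ⋃₀ M.Wr ∧ v ∉ ⋃₀ M.Wr)

/-- The reachability constraint: every node is attribute-accessible from a
base-labelled or variable-assigned node lying in the same w-set. -/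
def Reach (M : Model S) : Prop :=
  ∀ v : M.V, ∃ (u : M.V) (p : List S.ATTR),
    ((∃ b, M.iname b = some u) ∨ (∃ x, M.gN x = some u)) ∧
    M.sameW u v ∧ M.pathApply p u = some v

end Model

/-- A homomorphism `h = ⟨h_V, h_W⟩` of models, with `h_V : V → V' ⊎ 𝒲'` and
`h_W : 𝒲 → 𝒲'`, preserving types, attributes, relations, base-labels, wrapping
membership and assignments.  (Preservation statements of the form
`h_V(I(p)(v)) = I'(p)(h_V(v))` force the relevant values of `h_V` to be nodes,
since attributes, types, relations, base-labels and node-variable assignments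
only concern nodes.) -/
structure Hom {S : Signature} (M M' : Model S) where
  hV : M.V → M'.V ⊕ M'.Wrp
  hW : M.Wrp → M'.Wrp
  map_type : ∀ t v, v ∈ M.itype t → ∃ u, hV v = Sum.inl u ∧ u ∈ M'.itype t
  map_attr : ∀ a v v', M.iattr a v = some v' →
    ∃ u u', hV v = Sum.inl u ∧ hV v' = Sum.inl u' ∧ M'.iattr a u = some u'
  map_rel : ∀ r f, f ∈ M.irel r →
    ∃ f', (∀ i, hV (f i) = Sum.inl (f' i)) ∧ f' ∈ M'.irel r
  map_name : ∀ b v, M.iname b = some v → ∃ u, M'.iname b = some u ∧ hV v = Sum.inl u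
  map_wr : ∀ (W : M.Wrp), ∀ v ∈ W.val, ∃ u, hV v = Sum.inl u ∧ u ∈ (hW W).val
  map_gN : ∀ x v, M.gN x = some v → ∃ u, M'.gN x = some u ∧ hV v = Sum.inl u
  map_gW : ∀ x W, (h : M.gW x = some W) → M'.gW x = some (hW ⟨W, M.gW_mem x W h⟩).val

/-- `M` subsumes `M'` (written `M ⊑ M'`) if there is a homomorphism from `M` to `M'`. -/
def Subsumes {S : Signature} (M M' : Model S) : Prop := Nonempty (Hom M M')

/-- The extension of the node map of a homomorphism to wrappings (via `h_W`). -/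
def Hom.ext {S : Signature} {M M' : Model S} (h : Hom M M') :
    M.V ⊕ M.Wrp → M'.V ⊕ M'.Wrp :=
  Sum.elim h.hV (fun W => Sum.inr (h.hW W))

/-- `τ` is an inverse of the homomorphism `σ`: `σ_V` takes values in nodes only,
the (corestricted) node maps and the wrapping maps are mutually inverse bijections.
(Since `τ` is itself a homomorphism, this says exactly that `σ` is an isomorphism
with inverse `τ`.) -/
def Hom.IsInverse {S : Signature} {M M' : Model S} (σ : Hom M M') (τ : Hom M' M) : Prop :=
  (∀ v : M.V, ∃ u : M'.V, σ.hV v = Sum.inl u ∧ τ.hV u = Sum.inl v) ∧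
  (∀ u : M'.V, ∃ v : M.V, τ.hV u = Sum.inl v ∧ σ.hV v = Sum.inl u) ∧
  (∀ W : M.Wrp, τ.hW (σ.hW W) = W) ∧ (∀ W : M'.Wrp, σ.hW (τ.hW W) = W)

/-- A homomorphism `σ : M → M'` is an isomorphism if `σ_V` takes values in `V'` only,
`σ_V` and `σ_W` are bijections, and the inverse is a homomorphism `M' → M`. -/
def Hom.IsIso {S : Signature} {M M' : Model S} (σ : Hom M M') : Prop :=
  ∃ τ : Hom M' M, σ.IsInverse τ

/-- Two models are isomorphic if there is an isomorphism between them. -/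
def Isomorphic {S : Signature} (M M' : Model S) : Prop :=
  ∃ σ : Hom M M', σ.IsIso

/-!
On a model satisfying the reachability constraint, every endomorphism is the
identity: it fixes each base-labelled or variable-assigned node, it maps attribute paths to
attribute paths, so it fixes every node, and since wrappings are nonempty and pairwise
disjoint it then fixes every wrapping as well. Given `σ : M → M'` and `τ : M' → M`, both
composites are therefore identities, so `σ` is an isomorphism with inverse `τ`.
-/

namespace Model

variable {S : Signature} (M : Model S)

def IsLabelled (u : M.V) : Prop :=
  (∃ b, M.iname b = some u) ∨ (∃ x, M.gN x = some u)

variable {M}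

theorem Wrp.eq_of_mem {W X : M.Wrp} {v : M.V} (hW : v ∈ W.val) (hX : v ∈ X.val) : W = X := by
  by_contra hne
  have hempty := M.wr_disjoint W.val W.property X.val X.property (fun h => hne (Subtype.ext h))
  exact (Set.mem_empty_iff_false v).mp (hempty ▸ Set.mem_inter hW hX)

end Model

namespace Hom

variable {S : Signature} {M M' M'' : Model S}

@[simp]
theorem ext_inl (h : Hom M M') (v : M.V) : h.ext (Sum.inl v) = h.hV v := rfl

@[simp]
theorem ext_inr (h : Hom M M') (W : M.Wrp) : h.ext (Sum.inr W) = Sum.inr (h.hW W) := rfl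

protected def id (M : Model S) : Hom M M where
  hV := Sum.inl
  hW := id
  map_type _ v hv := ⟨v, rfl, hv⟩
  map_attr _ v v' h := ⟨v, v', rfl, rfl, h⟩
  map_rel _ f hf := ⟨f, fun _ => rfl, hf⟩
  map_name _ v h := ⟨v, h, rfl⟩
  map_wr _ v hv := ⟨v, rfl, hv⟩
  map_gN _ v h := ⟨v, h, rfl⟩
  map_gW _ _ h := h

/-- `σ` followed by `τ`; a node sent by `σ` to a wrapping `W` is sent to `τ_W(W)`. -/
def comp (σ : Hom M M') (τ : Hom M' M'') : Hom M M'' where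
  hV := τ.ext ∘ σ.hV
  hW := τ.hW ∘ σ.hW
  map_type t v hv := by
    obtain ⟨u, hu, hu'⟩ := σ.map_type t v hv
    obtain ⟨w, hw, hw'⟩ := τ.map_type t u hu'
    exact ⟨w, by simp [hu, hw], hw'⟩
  map_attr a v v' h := by
    obtain ⟨u, u', hu, hu', hattr⟩ := σ.map_attr a v v' h
    obtain ⟨w, w', hw, hw', hattr'⟩ := τ.map_attr a u u' hattr
    exact ⟨w, w', by simp [hu, hw], by simp [hu', hw'], hattr'⟩
  map_rel r f hf := by
    obtain ⟨f', hf', hmem⟩ := σ.map_rel r f hf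
    obtain ⟨f'', hf'', hmem'⟩ := τ.map_rel r f' hmem
    exact ⟨f'', fun i => by simp [hf' i, hf'' i], hmem'⟩
  map_name b v h := by
    obtain ⟨u, hu, hv⟩ := σ.map_name b v h
    obtain ⟨w, hw, hu'⟩ := τ.map_name b u hu
    exact ⟨w, hw, by simp [hv, hu']⟩
  map_wr W v hv := by
    obtain ⟨u, hu, hmem⟩ := σ.map_wr W v hv
    obtain ⟨w, hw, hmem'⟩ := τ.map_wr (σ.hW W) u hmem
    exact ⟨w, by simp [hu, hw], hmem'⟩
  map_gN x v h := by
    obtain ⟨u, hu, hv⟩ := σ.map_gN x v h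
    obtain ⟨w, hw, hu'⟩ := τ.map_gN x u hu
    exact ⟨w, hw, by simp [hv, hu']⟩
  map_gW x W h := τ.map_gW x _ (σ.map_gW x W h)

theorem comp_hV_eq_inl {σ : Hom M M'} {τ : Hom M' M''} {v : M.V} {w : M''.V} :
    (σ.comp τ).hV v = Sum.inl w ↔ ∃ u, σ.hV v = Sum.inl u ∧ τ.hV u = Sum.inl w := by
  change τ.ext (σ.hV v) = _ ↔ _
  rcases σ.hV v with u | W <;> simp

theorem map_pathApply (h : Hom M M') {p : List S.ATTR} {u v : M.V} {u' : M'.V}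
    (hu : h.hV u = Sum.inl u') (hp : M.pathApply p u = some v) :
    ∃ v', h.hV v = Sum.inl v' ∧ M'.pathApply p u' = some v' := by
  induction p generalizing u u' with
  | nil =>
    obtain rfl : u = v := Option.some_injective _ hp
    exact ⟨u', hu, rfl⟩
  | cons a p ih =>
    obtain ⟨w, hw, hp⟩ := Option.bind_eq_some_iff.mp hp
    obtain ⟨x, w', hx, hw', hattr⟩ := h.map_attr a u w hw
    obtain rfl : x = u' := Sum.inl_injective (hx.symm.trans hu)
    obtain ⟨v', hv', hp'⟩ := ih hw' hp
    exact ⟨v', hv', by simp [Model.pathApply, hattr, hp']⟩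

theorem hV_eq_self_of_isLabelled (h : Hom M M) {u : M.V} (hu : M.IsLabelled u) :
    h.hV u = Sum.inl u := by
  rcases hu with ⟨b, hb⟩ | ⟨x, hx⟩
  · obtain ⟨u', hu', heq⟩ := h.map_name b u hb
    obtain rfl := Option.some_injective _ (hb.symm.trans hu')
    exact heq
  · obtain ⟨u', hu', heq⟩ := h.map_gN x u hx
    obtain rfl := Option.some_injective _ (hx.symm.trans hu')
    exact heq

theorem hV_eq_self_of_reach (hM : M.Reach) (h : Hom M M) (v : M.V) : h.hV v = Sum.inl v := by
  obtain ⟨u, p, hlab, -, hp⟩ := hM v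
  obtain ⟨v', hv', hp'⟩ := h.map_pathApply (h.hV_eq_self_of_isLabelled hlab) hp
  obtain rfl := Option.some_injective _ (hp.symm.trans hp')
  exact hv'

theorem hW_eq_self_of_mem (h : Hom M M) {W : M.Wrp} {v : M.V} (hv : v ∈ W.val)
    (hfix : h.hV v = Sum.inl v) : h.hW W = W := by
  obtain ⟨u, hu, hmem⟩ := h.map_wr W v hv
  obtain rfl : v = u := Sum.inl_injective (hfix.symm.trans hu)
  exact Model.Wrp.eq_of_mem hmem hv

theorem hW_eq_self_of_reach (hM : M.Reach) (h : Hom M M) (W : M.Wrp) : h.hW W = W := by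
  obtain ⟨v, hv⟩ := M.wr_nonempty W.val W.property
  exact h.hW_eq_self_of_mem hv (h.hV_eq_self_of_reach hM v)

theorem isInverse_of_comp_eq_id {σ : Hom M M'} {τ : Hom M' M}
    (hV : ∀ v, (σ.comp τ).hV v = Sum.inl v) (hV' : ∀ u, (τ.comp σ).hV u = Sum.inl u)
    (hW : ∀ W, (σ.comp τ).hW W = W) (hW' : ∀ W, (τ.comp σ).hW W = W) : σ.IsInverse τ :=
  ⟨fun v => comp_hV_eq_inl.mp (hV v), fun u => comp_hV_eq_inl.mp (hV' u), hW, hW'⟩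

end Hom

/-- Subsumption is an order up to isomorphism: on models satisfying
the reachability constraint, `⊑` is reflexive, transitive, and antisymmetric up to
isomorphism (`M ⊑ M'` and `M' ⊑ M` imply that `M` and `M'` are isomorphic); hence it
induces a partial order on isomorphism classes of models. -/
theorem subsumption_order {S : Signature} :
    (∀ M : Model S, M.Reach → Subsumes M M) ∧
    (∀ M M' M'' : Model S, M.Reach → M'.Reach → M''.Reach →
      Subsumes M M' → Subsumes M' M'' → Subsumes M M'') ∧
    (∀ M M' : Model S, M.Reach → M'.Reach →
      Subsumes M M' → Subsumes M' M → Isomorphic M M') := by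
  refine ⟨fun M _ => ⟨Hom.id M⟩, fun _ _ _ _ _ _ ⟨σ⟩ ⟨τ⟩ => ⟨σ.comp τ⟩, ?_⟩
  rintro M M' hM hM' ⟨σ⟩ ⟨τ⟩
  exact ⟨σ, τ, Hom.isInverse_of_comp_eq_id ((σ.comp τ).hV_eq_self_of_reach hM)
    ((τ.comp σ).hV_eq_self_of_reach hM') ((σ.comp τ).hW_eq_self_of_reach hM)
    ((τ.comp σ).hW_eq_self_of_reach hM')⟩
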